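/- Asymptotic continuity: let M be any set of measurements on a quantum system of Hilbert space dimension k, and let G be a set of states on that system which contains the maximally mixed state τ = I/k and is star-shaped with respect to τ (i.e. pσ + (1−p)τ ∈ G for all σ ∈ G and 0 ≤ p ≤ 1). If ρ, ρ' are states with ||ρ − ρ'||_M ≤ ε ≤ 1/e, then |E^{(G)}_{r,M}(ρ) − E^{(G)}_{r,M}(ρ')| ≤ 2ε log(6k/ε). -/

import Mathlib

open Matrix Filter
open scoped Kronecker ENNReal Classical ComplexOrder

noncomputable section

namespace QIT

/-- A (finite-dimensional) quantum state: positive semidefinite with unit trace. -/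
def IsState {d : Type} [Fintype d] (ρ : Matrix d d ℂ) : Prop :=
  ρ.PosSemidef ∧ ρ.trace = 1

/-- Partial trace over the first tensor factor. -/
def ptrFst {X Y : Type} [Fintype X] (M : Matrix (X × Y) (X × Y) ℂ) : Matrix Y Y ℂ :=
  Matrix.of fun b b' => ∑ a, M (a, b) (a, b')

/-- Partial trace over the second tensor factor. -/
def ptrSnd {X Y : Type} [Fintype Y] (M : Matrix (X × Y) (X × Y) ℂ) : Matrix X X ℂ :=
  Matrix.of fun a a' => ∑ b, M (a, b) (a', b)

/-- For a tripartite state on (A ⊗ B) ⊗ E, trace out the middle factor B, giving A ⊗ E. -/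
def ptrMid {X Y Z : Type} [Fintype Y] (M : Matrix ((X × Y) × Z) ((X × Y) × Z) ℂ) :
    Matrix (X × Z) (X × Z) ℂ :=
  Matrix.of fun p q => ∑ b, M ((p.1, b), p.2) ((q.1, b), q.2)

/-- For a tripartite state on (A ⊗ B) ⊗ E, trace out the leftmost factor A, giving B ⊗ E. -/
def ptrLeft {X Y Z : Type} [Fintype X] (M : Matrix ((X × Y) × Z) ((X × Y) × Z) ℂ) :
    Matrix (Y × Z) (Y × Z) ℂ :=
  Matrix.of fun p q => ∑ a, M ((a, p.1), p.2) ((a, q.1), q.2)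

/-- Separable states on a bipartite system. -/
def IsSeparable {X Y : Type} [Fintype X] [Fintype Y]
    (σ : Matrix (X × Y) (X × Y) ℂ) : Prop :=
  ∃ (n : ℕ) (p : Fin n → ℝ) (ρ1 : Fin n → Matrix X X ℂ) (ρ2 : Fin n → Matrix Y Y ℂ),
    (∀ i, 0 ≤ p i) ∧ (∑ i, p i) = 1 ∧ (∀ i, IsState (ρ1 i)) ∧ (∀ i, IsState (ρ2 i)) ∧
    σ = ∑ i, (p i : ℂ) • (ρ1 i ⊗ₖ ρ2 i)

/-- Matrix logarithm (base 2) of a Hermitian matrix via the spectral decomposition,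
with the convention log 0 = 0 on the kernel; junk value 0 on non-Hermitian input. -/
def matLogb {d : Type} [Fintype d] [DecidableEq d] (A : Matrix d d ℂ) : Matrix d d ℂ :=
  if h : A.IsHermitian then
    (h.eigenvectorUnitary : Matrix d d ℂ) *
      Matrix.diagonal (fun i => ((Real.logb 2 (h.eigenvalues i) : ℝ) : ℂ)) *
      star (h.eigenvectorUnitary : Matrix d d ℂ)
  else 0

/-- Quantum relative entropy (base 2), +∞ if the support condition fails.  (For positive
semidefinite `σ`, the condition `∀ v, σ v = 0 → ρ v = 0` on kernels is equivalent to
supp ρ ⊆ supp σ.) -/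
def qRelEnt {d : Type} [Fintype d] [DecidableEq d] (ρ σ : Matrix d d ℂ) : ℝ≥0∞ :=
  if ∀ v : d → ℂ, σ.mulVec v = 0 → ρ.mulVec v = 0 then
    ENNReal.ofReal ((ρ * (matLogb ρ - matLogb σ)).trace.re)
  else ⊤

/-- Relative entropy of entanglement. -/
def Er {X Y : Type} [Fintype X] [DecidableEq X] [Fintype Y] [DecidableEq Y]
    (ρ : Matrix (X × Y) (X × Y) ℂ) : ℝ≥0∞ :=
  ⨅ (σ : Matrix (X × Y) (X × Y) ℂ) (_ : IsSeparable σ), qRelEnt ρ σ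

/-- n-fold tensor power of a bipartite state, arranged as a state on Aⁿ ⊗ Bⁿ. -/
def tpow {X Y : Type} (ρ : Matrix (X × Y) (X × Y) ℂ) (n : ℕ) :
    Matrix ((Fin n → X) × (Fin n → Y)) ((Fin n → X) × (Fin n → Y)) ℂ :=
  Matrix.of fun x y => ∏ i, ρ (x.1 i, x.2 i) (y.1 i, y.2 i)

/-- n-fold tensor power of a tripartite state on (A⊗B)⊗E, arranged on (Aⁿ⊗Bⁿ)⊗Eⁿ. -/
def tpow3 {X Y Z : Type} (ρ : Matrix ((X × Y) × Z) ((X × Y) × Z) ℂ) (n : ℕ) :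
    Matrix (((Fin n → X) × (Fin n → Y)) × (Fin n → Z))
           (((Fin n → X) × (Fin n → Y)) × (Fin n → Z)) ℂ :=
  Matrix.of fun u v => ∏ i, ρ ((u.1.1 i, u.1.2 i), u.2 i) ((v.1.1 i, v.1.2 i), v.2 i)

/-- Regularized relative entropy of entanglement. -/
def ErReg {X Y : Type} [Fintype X] [DecidableEq X] [Fintype Y] [DecidableEq Y]
    (ρ : Matrix (X × Y) (X × Y) ℂ) : ℝ≥0∞ :=
  Filter.limsup (fun n : ℕ => Er (tpow ρ n) / (n : ℝ≥0∞)) Filter.atTop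

/-- Classical relative entropy (base 2) of two finitely supported "probability vectors". -/
def klDiv2 {X : Type} [Fintype X] (P Q : X → ℝ) : ℝ≥0∞ :=
  if ∀ x, Q x = 0 → P x = 0 then
    ENNReal.ofReal (∑ x, P x * Real.logb 2 (P x / Q x))
  else ⊤

/-- Outcome distribution of a POVM on a state. -/
def mProb {d X : Type} [Fintype d] (M : X → Matrix d d ℂ) (ρ : Matrix d d ℂ) : X → ℝ :=
  fun x => ((ρ * M x).trace).re

/-- POVM condition. -/
def IsPOVM {d X : Type} [Fintype d] [DecidableEq d] [Fintype X]
    (M : X → Matrix d d ℂ) : Prop :=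
  (∀ x, (M x).PosSemidef) ∧ (∑ x, M x) = 1

/-- Conditions for a one-way (A→B) LOCC measurement with POVM elements R_k ⊗ S_{k,ℓ}. -/
def OneLOCCData {X Y : Type} [Fintype X] [DecidableEq X] [Fintype Y] [DecidableEq Y]
    {k l : ℕ} (R : Fin k → Matrix X X ℂ) (S : Fin k → Fin l → Matrix Y Y ℂ) : Prop :=
  (∀ i, (R i).PosSemidef) ∧ (∑ i, R i) = 1 ∧
    (∀ i j, (S i j).PosSemidef) ∧ (∀ i, (∑ j, S i j) = 1)

/-- The POVM of a one-way LOCC measurement. -/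
def oneLOCCPOVM {X Y : Type} {k l : ℕ} (R : Fin k → Matrix X X ℂ)
    (S : Fin k → Fin l → Matrix Y Y ℂ) : Fin k × Fin l → Matrix (X × Y) (X × Y) ℂ :=
  fun p => R p.1 ⊗ₖ S p.1 p.2

/-- One-way-LOCC restricted relative entropy of entanglement E_{r,1-LOCC}. -/
def ErOneLOCC {X Y : Type} [Fintype X] [DecidableEq X] [Fintype Y] [DecidableEq Y]
    (ρ : Matrix (X × Y) (X × Y) ℂ) : ℝ≥0∞ :=
  ⨅ (σ : Matrix (X × Y) (X × Y) ℂ) (_ : IsSeparable σ),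
    ⨆ (k : ℕ) (l : ℕ) (R : Fin k → Matrix X X ℂ) (S : Fin k → Fin l → Matrix Y Y ℂ)
      (_ : OneLOCCData R S),
      klDiv2 (mProb (oneLOCCPOVM R S) ρ) (mProb (oneLOCCPOVM R S) σ)

/-- Regularized E_{r,1-LOCC}. -/
def ErOneLOCCReg {X Y : Type} [Fintype X] [DecidableEq X] [Fintype Y] [DecidableEq Y]
    (ρ : Matrix (X × Y) (X × Y) ℂ) : ℝ≥0∞ :=
  Filter.limsup (fun n : ℕ => ErOneLOCC (tpow ρ n) / (n : ℝ≥0∞)) Filter.atTop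

/-- LO (product) restricted relative entropy of entanglement E_{r,LO}. -/
def ErLO {X Y : Type} [Fintype X] [DecidableEq X] [Fintype Y] [DecidableEq Y]
    (ρ : Matrix (X × Y) (X × Y) ℂ) : ℝ≥0∞ :=
  ⨅ (σ : Matrix (X × Y) (X × Y) ℂ) (_ : IsSeparable σ),
    ⨆ (k : ℕ) (l : ℕ) (R : Fin k → Matrix X X ℂ) (S : Fin l → Matrix Y Y ℂ)
      (_ : (∀ i, (R i).PosSemidef) ∧ (∑ i, R i) = 1 ∧
            (∀ j, (S j).PosSemidef) ∧ (∑ j, S j) = 1),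
      klDiv2 (mProb (fun p : Fin k × Fin l => R p.1 ⊗ₖ S p.2) ρ)
             (mProb (fun p : Fin k × Fin l => R p.1 ⊗ₖ S p.2) σ)

def ErLOReg {X Y : Type} [Fintype X] [DecidableEq X] [Fintype Y] [DecidableEq Y]
    (ρ : Matrix (X × Y) (X × Y) ℂ) : ℝ≥0∞ :=
  Filter.limsup (fun n : ℕ => ErLO (tpow ρ n) / (n : ℝ≥0∞)) Filter.atTop

/-- Families of pairs of local Kraus-operator products realizable by a finite-round
LOCC protocol (with two-way classical communication) on a bipartite system. -/
inductive LOCCFam (dA dB : Type) [Fintype dA] [DecidableEq dA] [Fintype dB] [DecidableEq dB] :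
    (dA' dB' X : Type) → (X → Matrix dA' dA ℂ) → (X → Matrix dB' dB ℂ) → Prop
  | base : LOCCFam dA dB dA dB PUnit (fun _ => 1) (fun _ => 1)
  | stepA {dA' dB' X : Type} {a : X → Matrix dA' dA ℂ} {b : X → Matrix dB' dB ℂ}
      (h : LOCCFam dA dB dA' dB' X a b)
      {dA'' K : Type} [Fintype dA'] [DecidableEq dA'] [Fintype dA''] [Fintype K]
      (κ : X → K → Matrix dA'' dA' ℂ)
      (hκ : ∀ x, (∑ j, (κ x j)ᴴ * κ x j) = (1 : Matrix dA' dA' ℂ)) :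
      LOCCFam dA dB dA'' dB' (X × K) (fun p => κ p.1 p.2 * a p.1) (fun p => b p.1)
  | stepB {dA' dB' X : Type} {a : X → Matrix dA' dA ℂ} {b : X → Matrix dB' dB ℂ}
      (h : LOCCFam dA dB dA' dB' X a b)
      {dB'' K : Type} [Fintype dB'] [DecidableEq dB'] [Fintype dB''] [Fintype K]
      (κ : X → K → Matrix dB'' dB' ℂ)
      (hκ : ∀ x, (∑ j, (κ x j)ᴴ * κ x j) = (1 : Matrix dB' dB' ℂ)) :
      LOCCFam dA dB dA' dB'' (X × K) (fun p => a p.1) (fun p => κ p.1 p.2 * b p.1)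
  | relabel {dA' dB' X : Type} {a : X → Matrix dA' dA ℂ} {b : X → Matrix dB' dB ℂ}
      (h : LOCCFam dA dB dA' dB' X a b) {Y : Type} (e : Y ≃ X) :
      LOCCFam dA dB dA' dB' Y (fun y => a (e y)) (fun y => b (e y))

/-- A POVM implementable by (two-way) LOCC: outcomes are coarse-grainings of the
histories of an LOCC protocol, with POVM elements (aᴴa) ⊗ (bᴴb). -/
def IsLOCCPOVM {X Y : Type} [Fintype X] [DecidableEq X] [Fintype Y] [DecidableEq Y]
    {m : ℕ} (M : Fin m → Matrix (X × Y) (X × Y) ℂ) : Prop :=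
  ∃ (p q n : ℕ) (a : Fin n → Matrix (Fin p) X ℂ) (b : Fin n → Matrix (Fin q) Y ℂ)
    (g : Fin n → Fin m),
    LOCCFam X Y (Fin p) (Fin q) (Fin n) a b ∧
    ∀ y, M y = ∑ x ∈ Finset.univ.filter (fun x => g x = y),
                  ((a x)ᴴ * a x) ⊗ₖ ((b x)ᴴ * b x)

/-- LOCC restricted relative entropy of entanglement E_{r,LOCC}. -/
def ErLOCC {X Y : Type} [Fintype X] [DecidableEq X] [Fintype Y] [DecidableEq Y]
    (ρ : Matrix (X × Y) (X × Y) ℂ) : ℝ≥0∞ :=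
  ⨅ (σ : Matrix (X × Y) (X × Y) ℂ) (_ : IsSeparable σ),
    ⨆ (m : ℕ) (M : Fin m → Matrix (X × Y) (X × Y) ℂ) (_ : IsLOCCPOVM M),
      klDiv2 (mProb M ρ) (mProb M σ)

def ErLOCCReg {X Y : Type} [Fintype X] [DecidableEq X] [Fintype Y] [DecidableEq Y]
    (ρ : Matrix (X × Y) (X × Y) ℂ) : ℝ≥0∞ :=
  Filter.limsup (fun n : ℕ => ErLOCC (tpow ρ n) / (n : ℝ≥0∞)) Filter.atTop

/-- Separable (positive) operator. -/
def IsSepOp {X Y : Type} [Fintype X] [Fintype Y] (Q : Matrix (X × Y) (X × Y) ℂ) : Prop :=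
  ∃ (n : ℕ) (a : Fin n → Matrix X X ℂ) (b : Fin n → Matrix Y Y ℂ),
    (∀ i, (a i).PosSemidef) ∧ (∀ i, (b i).PosSemidef) ∧ Q = ∑ i, a i ⊗ₖ b i

/-- SEP restricted relative entropy of entanglement E_{r,SEP}. -/
def ErSEP {X Y : Type} [Fintype X] [DecidableEq X] [Fintype Y] [DecidableEq Y]
    (ρ : Matrix (X × Y) (X × Y) ℂ) : ℝ≥0∞ :=
  ⨅ (σ : Matrix (X × Y) (X × Y) ℂ) (_ : IsSeparable σ),
    ⨆ (m : ℕ) (M : Fin m → Matrix (X × Y) (X × Y) ℂ)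
      (_ : IsPOVM M ∧ ∀ x, IsSepOp (M x)),
      klDiv2 (mProb M ρ) (mProb M σ)

def ErSEPReg {X Y : Type} [Fintype X] [DecidableEq X] [Fintype Y] [DecidableEq Y]
    (ρ : Matrix (X × Y) (X × Y) ℂ) : ℝ≥0∞ :=
  Filter.limsup (fun n : ℕ => ErSEP (tpow ρ n) / (n : ℝ≥0∞)) Filter.atTop

/-- Partial transpose on the first factor. -/
def ptranspose {X Y : Type} (Q : Matrix (X × Y) (X × Y) ℂ) : Matrix (X × Y) (X × Y) ℂ :=
  Matrix.of fun p q => Q (q.1, p.2) (p.1, q.2)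

/-- PPT restricted relative entropy of entanglement E_{r,PPT}. -/
def ErPPT {X Y : Type} [Fintype X] [DecidableEq X] [Fintype Y] [DecidableEq Y]
    (ρ : Matrix (X × Y) (X × Y) ℂ) : ℝ≥0∞ :=
  ⨅ (σ : Matrix (X × Y) (X × Y) ℂ) (_ : IsSeparable σ),
    ⨆ (m : ℕ) (M : Fin m → Matrix (X × Y) (X × Y) ℂ)
      (_ : IsPOVM M ∧ ∀ x, (ptranspose (M x)).PosSemidef),
      klDiv2 (mProb M ρ) (mProb M σ)

def ErPPTReg {X Y : Type} [Fintype X] [DecidableEq X] [Fintype Y] [DecidableEq Y]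
    (ρ : Matrix (X × Y) (X × Y) ℂ) : ℝ≥0∞ :=
  Filter.limsup (fun n : ℕ => ErPPT (tpow ρ n) / (n : ℝ≥0∞)) Filter.atTop

/-- Von Neumann entropy (base 2), via eigenvalues; junk value 0 on non-Hermitian input. -/
def vnEntropy {d : Type} [Fintype d] [DecidableEq d] (ρ : Matrix d d ℂ) : ℝ :=
  if h : ρ.IsHermitian then -∑ i, h.eigenvalues i * Real.logb 2 (h.eigenvalues i) else 0

/-- Quantum conditional mutual information I(A;B|E) of a state on (A⊗B)⊗E. -/
def qcmi {X Y Z : Type} [Fintype X] [DecidableEq X] [Fintype Y] [DecidableEq Y]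
    [Fintype Z] [DecidableEq Z] (ρ : Matrix ((X × Y) × Z) ((X × Y) × Z) ℂ) : ℝ :=
  vnEntropy (ptrMid ρ) + vnEntropy (ptrLeft ρ) - vnEntropy ρ - vnEntropy (ptrFst ρ)

/-- Squashed entanglement (infimum over finite-dimensional extensions). -/
def Esq {X Y : Type} [Fintype X] [DecidableEq X] [Fintype Y] [DecidableEq Y]
    (ρ : Matrix (X × Y) (X × Y) ℂ) : ℝ≥0∞ :=
  ⨅ (e : ℕ) (ω : Matrix ((X × Y) × Fin e) ((X × Y) × Fin e) ℂ)
    (_ : IsState ω ∧ ptrSnd ω = ρ),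
    ENNReal.ofReal (qcmi ω / 2)

/-- The classical extension Σ_i p_i ρ_i ⊗ |i⟩⟨i| of an ensemble. -/
def classExt {X Y : Type} {m : ℕ} (p : Fin m → ℝ)
    (ρi : Fin m → Matrix (X × Y) (X × Y) ℂ) :
    Matrix ((X × Y) × Fin m) ((X × Y) × Fin m) ℂ :=
  Matrix.of fun u v => if u.2 = v.2 then (p u.2 : ℂ) * ρi u.2 u.1 v.1 else 0

/-- c-squashed entanglement (infimum over classical extensions). -/
def Esqc {X Y : Type} [Fintype X] [DecidableEq X] [Fintype Y] [DecidableEq Y]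
    (ρ : Matrix (X × Y) (X × Y) ℂ) : ℝ≥0∞ :=
  ⨅ (m : ℕ) (p : Fin m → ℝ) (ρi : Fin m → Matrix (X × Y) (X × Y) ℂ)
    (_ : (∀ i, 0 ≤ p i) ∧ (∑ i, p i) = 1 ∧ (∀ i, IsState (ρi i)) ∧
          (∑ i, (p i : ℂ) • ρi i) = ρ),
    ENNReal.ofReal (qcmi (classExt p ρi) / 2)

def EsqcReg {X Y : Type} [Fintype X] [DecidableEq X] [Fintype Y] [DecidableEq Y]
    (ρ : Matrix (X × Y) (X × Y) ℂ) : ℝ≥0∞ :=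
  Filter.limsup (fun n : ℕ => Esqc (tpow ρ n) / (n : ℝ≥0∞)) Filter.atTop

/-- Mutual information I(X;Y) of a bipartite state. -/
def mutInfo {X Y : Type} [Fintype X] [DecidableEq X] [Fintype Y] [DecidableEq Y]
    (ρ : Matrix (X × Y) (X × Y) ℂ) : ℝ :=
  vnEntropy (ptrSnd ρ) + vnEntropy (ptrFst ρ) - vnEntropy ρ

/-- Marginal on A⊗B of a state on (A⊗A')⊗(B⊗B'). -/
def margMain {X Y : Type} {a b : ℕ}
    (ω : Matrix ((X × Fin a) × (Y × Fin b)) ((X × Fin a) × (Y × Fin b)) ℂ) :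
    Matrix (X × Y) (X × Y) ℂ :=
  Matrix.of fun p q => ∑ i, ∑ j, ω ((p.1, i), (p.2, j)) ((q.1, i), (q.2, j))

/-- Marginal on A'⊗B' of a state on (A⊗A')⊗(B⊗B'). -/
def margAux {X Y : Type} [Fintype X] [Fintype Y] {a b : ℕ}
    (ω : Matrix ((X × Fin a) × (Y × Fin b)) ((X × Fin a) × (Y × Fin b)) ℂ) :
    Matrix (Fin a × Fin b) (Fin a × Fin b) ℂ :=
  Matrix.of fun p q => ∑ x, ∑ y, ω ((x, p.1), (y, p.2)) ((x, q.1), (y, q.2))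

/-- Conditional entanglement of mutual information. -/
def EI {X Y : Type} [Fintype X] [DecidableEq X] [Fintype Y] [DecidableEq Y]
    (ρ : Matrix (X × Y) (X × Y) ℂ) : ℝ≥0∞ :=
  ⨅ (a : ℕ) (b : ℕ)
    (ω : Matrix ((X × Fin a) × (Y × Fin b)) ((X × Fin a) × (Y × Fin b)) ℂ)
    (_ : IsState ω ∧ margMain ω = ρ),
    ENNReal.ofReal ((mutInfo ω - mutInfo (margAux ω)) / 2)

/-- An LOCC quantum channel between bipartite systems. -/
def IsLOCCChannel {X Y X' Y' : Type} [Fintype X] [DecidableEq X] [Fintype Y] [DecidableEq Y]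
    [Fintype X'] [Fintype Y']
    (Λ : Matrix (X × Y) (X × Y) ℂ → Matrix (X' × Y') (X' × Y') ℂ) : Prop :=
  ∃ (n : ℕ) (a : Fin n → Matrix X' X ℂ) (b : Fin n → Matrix Y' Y ℂ),
    LOCCFam X Y X' Y' (Fin n) a b ∧
    ∀ ω, Λ ω = ∑ x, (a x ⊗ₖ b x) * ω * (a x ⊗ₖ b x)ᴴ

/-- E_{r,→}: the LOCC-processed one-way LOCC relative entropy of entanglement. -/
def ErArrow {X Y : Type} [Fintype X] [DecidableEq X] [Fintype Y] [DecidableEq Y]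
    (ρ : Matrix (X × Y) (X × Y) ℂ) : ℝ≥0∞ :=
  ⨆ (p : ℕ) (q : ℕ)
    (Λ : Matrix (X × Y) (X × Y) ℂ → Matrix (Fin p × Fin q) (Fin p × Fin q) ℂ)
    (_ : IsLOCCChannel Λ),
    ErOneLOCC (Λ ρ)

def ErArrowReg {X Y : Type} [Fintype X] [DecidableEq X] [Fintype Y] [DecidableEq Y]
    (ρ : Matrix (X × Y) (X × Y) ℂ) : ℝ≥0∞ :=
  Filter.limsup (fun n : ℕ => ErArrow (tpow ρ n) / (n : ℝ≥0∞)) Filter.atTop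

/-- Trace norm of a Hermitian matrix (junk value 0 on non-Hermitian input). -/
def traceNorm {d : Type} [Fintype d] [DecidableEq d] (M : Matrix d d ℂ) : ℝ :=
  if h : M.IsHermitian then ∑ i, |h.eigenvalues i| else 0

/-- The rank-d maximally entangled state Φ_d. -/
def MES (d : ℕ) : Matrix (Fin d × Fin d) (Fin d × Fin d) ℂ :=
  Matrix.of fun p q => if p.1 = p.2 ∧ q.1 = q.2 then ((d : ℂ))⁻¹ else 0

/-- Distillable entanglement. -/
def Ed {X Y : Type} [Fintype X] [DecidableEq X] [Fintype Y] [DecidableEq Y]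
    (ρ : Matrix (X × Y) (X × Y) ℂ) : ℝ≥0∞ :=
  ⨆ (dseq : ℕ → ℕ)
    (Λ : ∀ n : ℕ, Matrix ((Fin n → X) × (Fin n → Y)) ((Fin n → X) × (Fin n → Y)) ℂ →
          Matrix (Fin (dseq n) × Fin (dseq n)) (Fin (dseq n) × Fin (dseq n)) ℂ)
    (_ : (∀ n, IsLOCCChannel (Λ n)) ∧
         Filter.Tendsto (fun n => traceNorm (Λ n (tpow ρ n) - MES (dseq n)))
           Filter.atTop (nhds 0)),
    Filter.liminf (fun n : ℕ => ENNReal.ofReal (Real.logb 2 (dseq n)) / (n : ℝ≥0∞))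
      Filter.atTop

/-- A one-way LOCC (A→B) quantum instrument with classical output `Fin m` and quantum
output on B: Alice applies an instrument with outcomes k and Kraus operators A k i,
communicates k; Bob applies an instrument with classical outcome x and Kraus B k x j. -/
structure OneLOCCInstr (X Y : Type) [Fintype X] [DecidableEq X] [Fintype Y] [DecidableEq Y]
    (m : ℕ) where
  nK : ℕ
  nI : ℕ
  nJ : ℕ
  A : Fin nK → Fin nI → Matrix X X ℂ
  B : Fin nK → Fin m → Fin nJ → Matrix Y Y ℂ
  hA : (∑ k, ∑ i, (A k i)ᴴ * A k i) = 1
  hB : ∀ k, (∑ x, ∑ j, (B k x j)ᴴ * B k x j) = 1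

/-- The x-component of the instrument applied to a state of AB together with an
untouched environment E. -/
def OneLOCCInstr.comp {X Y Z : Type} [Fintype X] [DecidableEq X] [Fintype Y] [DecidableEq Y]
    [Fintype Z] [DecidableEq Z] {m : ℕ} (T : OneLOCCInstr X Y m) (x : Fin m)
    (ω : Matrix ((X × Y) × Z) ((X × Y) × Z) ℂ) : Matrix (Y × Z) (Y × Z) ℂ :=
  ∑ k, ∑ i, ∑ j,
    ptrLeft (((T.A k i ⊗ₖ T.B k x j) ⊗ₖ (1 : Matrix Z Z ℂ)) * ω *
             ((T.A k i ⊗ₖ T.B k x j) ⊗ₖ (1 : Matrix Z Z ℂ))ᴴ)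

/-- The classical output distribution T^c of the instrument on a state of AB. -/
def OneLOCCInstr.cOut {X Y : Type} [Fintype X] [DecidableEq X] [Fintype Y] [DecidableEq Y]
    {m : ℕ} (T : OneLOCCInstr X Y m) (ω : Matrix (X × Y) (X × Y) ℂ) : Fin m → ℝ :=
  fun x => (∑ k, ∑ i, ∑ j,
    ((T.A k i ⊗ₖ T.B k x j) * ω * (T.A k i ⊗ₖ T.B k x j)ᴴ).trace).re

/-- The quantum output T^q ⊗ id_E of the instrument on a state of (A⊗B)⊗E. -/
def OneLOCCInstr.qOut {X Y Z : Type} [Fintype X] [DecidableEq X] [Fintype Y] [DecidableEq Y]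
    [Fintype Z] [DecidableEq Z] {m : ℕ} (T : OneLOCCInstr X Y m)
    (ω : Matrix ((X × Y) × Z) ((X × Y) × Z) ℂ) : Matrix (Y × Z) (Y × Z) ℂ :=
  ∑ x, T.comp x ω

/-- The maximally mixed state. -/
def maxMixed (d : Type) [Fintype d] [DecidableEq d] : Matrix d d ℂ :=
  ((Fintype.card d : ℂ))⁻¹ • (1 : Matrix d d ℂ)

/-- Relative entropy of "entanglement" w.r.t. a set of states G and a set of
measurements Ms (measurements encoded as pairs of an outcome count and a POVM). -/
def ErG {d : Type} [Fintype d] [DecidableEq d]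
    (G : Set (Matrix d d ℂ)) (Ms : Set (Σ m : ℕ, Fin m → Matrix d d ℂ))
    (ρ : Matrix d d ℂ) : ℝ≥0∞ :=
  ⨅ (σ : Matrix d d ℂ) (_ : σ ∈ G),
    ⨆ (M : Σ m : ℕ, Fin m → Matrix d d ℂ) (_ : M ∈ Ms),
      klDiv2 (mProb M.2 ρ) (mProb M.2 σ)

/-- The distinguishability (pseudo-)norm ‖ρ−ρ'‖_Ms induced by a set of measurements. -/
def distMeas {d : Type} [Fintype d] [DecidableEq d]
    (Ms : Set (Σ m : ℕ, Fin m → Matrix d d ℂ)) (ρ ρ' : Matrix d d ℂ) : ℝ :=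
  ⨆ (M : Σ m : ℕ, Fin m → Matrix d d ℂ) (_ : M ∈ Ms),
    ∑ x, |mProb M.2 ρ x - mProb M.2 ρ' x|

/-- One-way LOCC distinguishability norm ‖ρ−ρ'‖_{1-LOCC}. -/
def oneLOCCDist {X Y : Type} [Fintype X] [DecidableEq X] [Fintype Y] [DecidableEq Y]
    (ρ ρ' : Matrix (X × Y) (X × Y) ℂ) : ℝ :=
  ⨆ (k : ℕ) (l : ℕ) (R : Fin k → Matrix X X ℂ) (S : Fin k → Fin l → Matrix Y Y ℂ)
    (_ : OneLOCCData R S),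
    ∑ p, |mProb (oneLOCCPOVM R S) ρ p - mProb (oneLOCCPOVM R S) ρ' p|

/-- Reindexing a tripartite system (A⊗B)⊗E into the bipartite split B : (A⊗E). -/
def splitBAE {X Y Z : Type} : (X × Y) × Z ≃ Y × (X × Z) where
  toFun := fun u => (u.1.2, (u.1.1, u.2))
  invFun := fun u => ((u.2.1, u.1), u.2.2)
  left_inv := fun _ => rfl
  right_inv := fun _ => rfl

/-- A tripartite state regarded as a bipartite state across B : AE. -/
def asBAE {X Y Z : Type} (ρ : Matrix ((X × Y) × Z) ((X × Y) × Z) ℂ) :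
    Matrix (Y × (X × Z)) (Y × (X × Z)) ℂ :=
  Matrix.reindex splitBAE splitBAE ρ

end QIT

open QIT

variable {dA dB dE : Type} [Fintype dA] [DecidableEq dA] [Fintype dB] [DecidableEq dB]
  [Fintype dE] [DecidableEq dE]

/-!
Given `σ' ∈ G`, compare `ρ` with the smoothed state `σ = σ'/(1+ε) + ε/(1+ε) · τ`, which lies in `G`.
For each measurement, let `P, P', Q, Q', U` be the outcome distributions of `ρ, ρ', σ, σ', τ`.
Since `P ≤ k U`, the ratio `P/Q` is at most `K = (1+ε)k/ε`, so replacing `P` by `P'` (at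
total variation distance `ε`) in `∑ P log (P/Q)` costs at most `ε (log K + 2)`; since
`Q ≥ Q'/(1+ε)`, replacing `Q` by `Q'` costs at most `log (1+ε)`. For `ε ≤ 1/e` the total is at most
`2 ε log (6k/ε)`.
-/

namespace QIT

open Real

section RelativeEntropy

variable {ι : Type} [Fintype ι]

lemma mul_log_div_sub_mul_log_div_le_of_le {a b q : ℝ} (hb : 0 ≤ b) (hba : b ≤ a) :
    a * log (a / q) - b * log (b / q) ≤ (a - b) * (log (a / q) + 1) := by
  rcases hb.eq_or_lt with rfl | hb
  · simp only [zero_div, log_zero, mul_zero, sub_zero]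
    nlinarith
  rcases eq_or_ne q 0 with rfl | hq
  · simp only [div_zero, log_zero, mul_zero, sub_zero, zero_add, mul_one]
    linarith
  have ha : 0 < a := hb.trans_le hba
  have hlog : b * log (a / b) ≤ a - b := by
    have := log_le_sub_one_of_pos (div_pos ha hb)
    calc b * log (a / b) ≤ b * (a / b - 1) := by gcongr
      _ = a - b := by field_simp
  rw [log_div ha.ne' hb.ne'] at hlog
  rw [log_div ha.ne' hq, log_div hb.ne' hq]
  linarith

lemma mul_log_div_sub_mul_log_div_le_of_ge {a b q : ℝ} (ha : 0 ≤ a) (hab : a ≤ b) (hq : 0 < q) :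
    a * log (a / q) - b * log (b / q) ≤ (b - a) * log (q / b) := by
  have hmono : a * log (a / q) ≤ a * log (b / q) := by
    rcases ha.eq_or_lt with rfl | ha
    · simp
    · gcongr
  have hrev : log (q / b) = -log (b / q) := by rw [← log_inv, inv_div]
  rw [hrev]
  linarith

lemma mul_log_div_sub_mul_log_div_le {a b q ε K : ℝ} (ha : 0 ≤ a) (hb : 0 ≤ b) (hq : 0 ≤ q)
    (hε : 0 < ε) (hK : 1 ≤ K) (hεK : 1 ≤ ε * K) (haK : a ≤ K * q) :
    a * log (a / q) - b * log (b / q) ≤ |a - b| * (log K + 1) + ε * q := by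
  have hlogK : 0 ≤ log K := log_nonneg hK
  rcases hq.eq_or_lt with rfl | hq
  · simp only [div_zero, log_zero, mul_zero, sub_zero, add_zero]
    positivity
  rcases le_total b a with hba | hab
  · have hlog : log (a / q) ≤ log K := by
      rcases ha.eq_or_lt with rfl | ha
      · simpa using hlogK
      · exact log_le_log (by positivity) ((div_le_iff₀ hq).2 haK)
    calc a * log (a / q) - b * log (b / q) ≤ (a - b) * (log (a / q) + 1) :=
          mul_log_div_sub_mul_log_div_le_of_le hb hba
      _ ≤ |a - b| * (log K + 1) + ε * q := by
          rw [abs_of_nonneg (sub_nonneg.2 hba)]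
          nlinarith [sub_nonneg.2 hba, mul_pos hε hq]
  · rcases hb.eq_or_lt with rfl | hb
    · have : a = 0 := le_antisymm hab ha
      subst this
      simpa using (mul_pos hε hq).le
    have hsplit : log (q / b) ≤ ε * q / b - 1 + log K := by
      have h1 := log_le_sub_one_of_pos (show 0 < ε * q / b by positivity)
      have h2 : log ε⁻¹ ≤ log K := log_le_log (by positivity) ((inv_le_iff_one_le_mul₀' hε).2 hεK)
      rw [log_inv] at h2
      rw [show q / b = ε * q / b * ε⁻¹ by field_simp, log_mul (by positivity) (by positivity),
        log_inv]
      linarith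
    have hfrac : (b - a) * (ε * q / b) ≤ ε * q := by
      rw [mul_div_assoc', div_le_iff₀ hb]
      nlinarith [mul_pos hε hq]
    calc a * log (a / q) - b * log (b / q) ≤ (b - a) * log (q / b) :=
          mul_log_div_sub_mul_log_div_le_of_ge ha hab hq
      _ ≤ (b - a) * (ε * q / b - 1 + log K) := by gcongr
      _ ≤ |a - b| * (log K + 1) + ε * q := by
          rw [abs_of_nonpos (sub_nonpos.2 hab)]
          nlinarith

lemma sum_mul_log_div_le_add_of_sum_abs_sub_le {P P' Q : ι → ℝ} {ε K : ℝ}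
    (hP : ∀ x, 0 ≤ P x) (hP' : ∀ x, 0 ≤ P' x) (hQ : ∀ x, 0 ≤ Q x) (hQ1 : ∑ x, Q x ≤ 1)
    (hε : 0 < ε) (hK : 1 ≤ K) (hεK : 1 ≤ ε * K) (hPQ : ∀ x, P x ≤ K * Q x)
    (hdiff : ∑ x, |P x - P' x| ≤ ε) :
    ∑ x, P x * log (P x / Q x) ≤ ∑ x, P' x * log (P' x / Q x) + ε * (log K + 2) := by
  have hpoint := fun x ↦
    mul_log_div_sub_mul_log_div_le (hP x) (hP' x) (hQ x) hε hK hεK (hPQ x)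
  have hsum := Finset.sum_le_sum fun x (_ : x ∈ Finset.univ) ↦ hpoint x
  rw [Finset.sum_sub_distrib, Finset.sum_add_distrib, ← Finset.sum_mul, ← Finset.mul_sum] at hsum
  have hlogK : 0 ≤ log K + 1 := by linarith [log_nonneg hK]
  nlinarith [mul_le_mul_of_nonneg_right hdiff hlogK, mul_le_mul_of_nonneg_left hQ1 hε.le]

lemma sum_mul_log_div_le_of_mul_le {P Q Q' : ι → ℝ} {c : ℝ} (hc : 0 < c)
    (hP : ∀ x, 0 ≤ P x) (hQ' : ∀ x, 0 ≤ Q' x) (hcQ : ∀ x, c * Q' x ≤ Q x)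
    (hsupp : ∀ x, Q' x = 0 → P x = 0) :
    ∑ x, P x * log (P x / Q x) ≤ ∑ x, P x * log (P x / Q' x) - (∑ x, P x) * log c := by
  rw [Finset.sum_mul, ← Finset.sum_sub_distrib]
  refine Finset.sum_le_sum fun x _ ↦ ?_
  rcases (hP x).eq_or_lt with hx | hx
  · simp [← hx]
  have hQ'x : 0 < Q' x := (hQ' x).lt_of_ne fun h ↦ hx.ne' (hsupp x h.symm)
  have hQx : 0 < Q x := (mul_pos hc hQ'x).trans_le (hcQ x)
  have hle : log (P x / Q x) ≤ log (P x / Q' x) - log c := by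
    rw [← log_div (by positivity) hc.ne', div_div, mul_comm]
    exact log_le_log (by positivity) (div_le_div_of_nonneg_left hx.le (by positivity) (hcQ x))
  nlinarith

lemma log_one_add_add_mul_log_le {ε k : ℝ} (hε : 0 < ε) (hεe : ε ≤ (exp 1)⁻¹) (hk : 1 ≤ k) :
    log (1 + ε) + ε * (log ((1 + ε) * k / ε) + 2) ≤ 2 * ε * log (6 * k / ε) := by
  have hlog1 : log (1 + ε) ≤ ε := by linarith [log_le_sub_one_of_pos (by positivity : 0 < 1 + ε)]
  have hlogε : log ε ≤ -1 := by
    simpa [log_inv] using log_le_log hε hεe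
  have hε1 : ε ≤ 1 := hεe.trans (inv_le_one_of_one_le₀ (one_le_exp zero_le_one))
  have hlog6 : 3 / 2 ≤ log 6 := by
    have h3 : 1 < log 3 := by
      rw [lt_log_iff_exp_lt (by norm_num)]
      exact exp_one_lt_d9.trans (by norm_num)
    rw [show (6 : ℝ) = 2 * 3 by norm_num, log_mul (by norm_num) (by norm_num)]
    linarith [log_two_gt_d9]
  have hlogk : 0 ≤ log k := log_nonneg hk
  rw [log_div (by positivity) hε.ne', log_mul (by positivity) (by positivity),
    log_div (by positivity) hε.ne', log_mul (by norm_num) (by positivity)]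
  nlinarith [mul_le_mul_of_nonneg_left hlog1 hε.le]

lemma le_mul_mix_of_le_mul {a q u ε k : ℝ} (hε : 0 < ε) (hk : 0 ≤ k) (hq : 0 ≤ q)
    (hau : a ≤ k * u) :
    a ≤ (1 + ε) * k / ε * ((1 + ε)⁻¹ * q + (1 - (1 + ε)⁻¹) * u) := by
  have h : (1 + ε) * k / ε * ((1 + ε)⁻¹ * q + (1 - (1 + ε)⁻¹) * u) = k * q / ε + k * u := by
    field_simp
    ring
  rw [h]
  have : 0 ≤ k * q / ε := by positivity
  linarith

theorem sum_mul_log_div_le_of_mix {P P' Q Q' U : ι → ℝ} {ε k : ℝ} (hε : 0 < ε)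
    (hεe : ε ≤ (exp 1)⁻¹) (hk : 1 ≤ k) (hP : ∀ x, 0 ≤ P x) (hP' : ∀ x, 0 ≤ P' x)
    (hQ' : ∀ x, 0 ≤ Q' x) (hU : ∀ x, 0 ≤ U x) (hPU : ∀ x, P x ≤ k * U x)
    (hP'1 : ∑ x, P' x = 1) (hQ'1 : ∑ x, Q' x = 1) (hU1 : ∑ x, U x = 1)
    (hQ : ∀ x, Q x = (1 + ε)⁻¹ * Q' x + (1 - (1 + ε)⁻¹) * U x)
    (hdiff : ∑ x, |P x - P' x| ≤ ε) (hsupp : ∀ x, Q' x = 0 → P' x = 0) :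
    ∑ x, P x * log (P x / Q x) ≤ ∑ x, P' x * log (P' x / Q' x) + 2 * ε * log (6 * k / ε) := by
  have hw : 0 ≤ 1 - (1 + ε)⁻¹ := sub_nonneg.2 (inv_le_one_of_one_le₀ (by linarith))
  have hQ0 : ∀ x, 0 ≤ Q x := fun x ↦ by
    rw [hQ]; have := hQ' x; have := hU x; positivity
  have hQ1 : ∑ x, Q x ≤ 1 := by
    simp only [hQ, Finset.sum_add_distrib, ← Finset.mul_sum, hQ'1, hU1]
    linarith
  have hK : 1 ≤ (1 + ε) * k / ε := by
    rw [le_div_iff₀ hε]; nlinarith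
  have hεK : 1 ≤ ε * ((1 + ε) * k / ε) := by
    rw [mul_div_cancel₀ _ hε.ne']; nlinarith
  have hPQ : ∀ x, P x ≤ (1 + ε) * k / ε * Q x := fun x ↦ by
    rw [hQ]; exact le_mul_mix_of_le_mul hε (by linarith) (hQ' x) (hPU x)
  have hQ'Q : ∀ x, (1 + ε)⁻¹ * Q' x ≤ Q x := fun x ↦ by
    rw [hQ]; have := hU x; nlinarith
  calc ∑ x, P x * log (P x / Q x)
      ≤ ∑ x, P' x * log (P' x / Q x) + ε * (log ((1 + ε) * k / ε) + 2) :=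
        sum_mul_log_div_le_add_of_sum_abs_sub_le hP hP' hQ0 hQ1 hε hK hεK hPQ hdiff
    _ ≤ ∑ x, P' x * log (P' x / Q' x) + log (1 + ε) + ε * (log ((1 + ε) * k / ε) + 2) := by
        have := sum_mul_log_div_le_of_mul_le (by positivity) hP' hQ' hQ'Q hsupp
        rw [hP'1, log_inv] at this
        linarith
    _ ≤ ∑ x, P' x * log (P' x / Q' x) + 2 * ε * log (6 * k / ε) := by
        linarith [log_one_add_add_mul_log_le hε hεe hk]

lemma klDiv2_le_add_ofReal {P Q P' Q' : ι → ℝ} {c : ℝ} (hPQ : ∀ x, Q x = 0 → P x = 0)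
    (h : (∀ x, Q' x = 0 → P' x = 0) →
      ∑ x, P x * log (P x / Q x) ≤ ∑ x, P' x * log (P' x / Q' x) + c) :
    klDiv2 P Q ≤ klDiv2 P' Q' + ENNReal.ofReal (c / log 2) := by
  unfold klDiv2
  rw [if_pos hPQ]
  split_ifs with hP'Q'
  · refine (ENNReal.ofReal_le_ofReal ?_).trans ENNReal.ofReal_add_le
    simp_rw [logb, ← mul_div_assoc, ← Finset.sum_div, ← add_div]
    gcongr
    exact h hP'Q'
  · simp

theorem klDiv2_le_add_of_mix {P P' Q Q' U : ι → ℝ} {ε k : ℝ} (hε : 0 ≤ ε)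
    (hεe : ε ≤ (exp 1)⁻¹) (hk : 1 ≤ k) (hP : ∀ x, 0 ≤ P x) (hP' : ∀ x, 0 ≤ P' x)
    (hQ' : ∀ x, 0 ≤ Q' x) (hU : ∀ x, 0 ≤ U x) (hPU : ∀ x, P x ≤ k * U x)
    (hP'1 : ∑ x, P' x = 1) (hQ'1 : ∑ x, Q' x = 1) (hU1 : ∑ x, U x = 1)
    (hQ : ∀ x, Q x = (1 + ε)⁻¹ * Q' x + (1 - (1 + ε)⁻¹) * U x)
    (hdiff : ∑ x, |P x - P' x| ≤ ε) :
    klDiv2 P Q ≤ klDiv2 P' Q' + ENNReal.ofReal (2 * ε * logb 2 (6 * k / ε)) := by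
  rcases hε.eq_or_lt with rfl | hε
  · have hPP' : P = P' := funext fun x ↦ sub_eq_zero.1 <| abs_eq_zero.1 <|
      (Finset.sum_eq_zero_iff_of_nonneg fun x _ ↦ abs_nonneg _).1
        (le_antisymm hdiff (by positivity)) x (Finset.mem_univ x)
    have hQQ' : Q = Q' := funext fun x ↦ by simp [hQ]
    rw [hPP', hQQ']
    exact le_self_add
  have hPQ : ∀ x, Q x = 0 → P x = 0 := fun x hx ↦ by
    have := le_mul_mix_of_le_mul hε (by linarith) (hQ' x) (hPU x)
    rw [← hQ, hx, mul_zero] at this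
    exact le_antisymm this (hP x)
  rw [logb, ← mul_div_assoc]
  exact klDiv2_le_add_ofReal hPQ fun hsupp ↦
    sum_mul_log_div_le_of_mix hε hεe hk hP hP' hQ' hU hPU hP'1 hQ'1 hU1 hQ hdiff hsupp

end RelativeEntropy

section Frobenius

attribute [local instance] Matrix.frobeniusNormedAddCommGroup

variable {m n : Type} [Fintype m] [Fintype n]

lemma _root_.Matrix.trace_conjTranspose_mul_self_eq_frobenius_sq (A : Matrix m n ℂ) :
    (Aᴴ * A).trace = ((‖A‖ ^ 2 : ℝ) : ℂ) := by
  rw [Matrix.frobenius_norm_def, ← Real.rpow_natCast, ← Real.rpow_mul (by positivity),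
    Nat.cast_ofNat, one_div_mul_cancel two_ne_zero, Real.rpow_one]
  simp only [Real.rpow_two, Complex.ofReal_sum, Complex.ofReal_pow, Matrix.trace, Matrix.diag,
    Matrix.mul_apply, Matrix.conjTranspose_apply, ← Complex.conj_mul']
  exact Finset.sum_comm

lemma _root_.Matrix.trace_conjTranspose_mul_self_mul_eq_frobenius_sq (C D : Matrix n n ℂ) :
    (Cᴴ * C * (Dᴴ * D)).trace = ((‖D * Cᴴ‖ ^ 2 : ℝ) : ℂ) := by
  rw [← Matrix.trace_conjTranspose_mul_self_eq_frobenius_sq, Matrix.conjTranspose_mul,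
    Matrix.conjTranspose_conjTranspose, Matrix.mul_assoc, Matrix.trace_mul_comm Cᴴ]
  simp only [Matrix.mul_assoc]

end Frobenius

section PosSemidef

attribute [local instance] Matrix.frobeniusNormedAddCommGroup
open scoped MatrixOrder

variable {n : Type} [Fintype n] {A B : Matrix n n ℂ}

lemma _root_.Matrix.PosSemidef.exists_eq_conjTranspose_mul_self (hA : A.PosSemidef) :
    ∃ C, A = Cᴴ * C :=
  CStarAlgebra.nonneg_iff_eq_star_mul_self.mp hA.nonneg

lemma _root_.Matrix.PosSemidef.re_trace_mul_nonneg (hA : A.PosSemidef) (hB : B.PosSemidef) :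
    0 ≤ (A * B).trace.re := by
  obtain ⟨C, rfl⟩ := hA.exists_eq_conjTranspose_mul_self
  obtain ⟨D, rfl⟩ := hB.exists_eq_conjTranspose_mul_self
  rw [Matrix.trace_conjTranspose_mul_self_mul_eq_frobenius_sq, Complex.ofReal_re]
  positivity

-- With `A = Cᴴ C`, `B = Dᴴ D` and Frobenius norms, `tr (A B) = ‖D Cᴴ‖² ≤ ‖C‖² ‖D‖² = tr A tr B`.
lemma _root_.Matrix.PosSemidef.re_trace_mul_le (hA : A.PosSemidef) (hB : B.PosSemidef) :
    (A * B).trace.re ≤ A.trace.re * B.trace.re := by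
  obtain ⟨C, rfl⟩ := hA.exists_eq_conjTranspose_mul_self
  obtain ⟨D, rfl⟩ := hB.exists_eq_conjTranspose_mul_self
  simp only [Matrix.trace_conjTranspose_mul_self_mul_eq_frobenius_sq,
    Matrix.trace_conjTranspose_mul_self_eq_frobenius_sq, Complex.ofReal_re]
  calc ‖D * Cᴴ‖ ^ 2 ≤ (‖D‖ * ‖Cᴴ‖) ^ 2 := by gcongr; exact Matrix.frobenius_norm_mul D Cᴴ
    _ = ‖C‖ ^ 2 * ‖D‖ ^ 2 := by rw [Matrix.frobenius_norm_conjTranspose]; ring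

end PosSemidef

variable {d X : Type} [Fintype d]

lemma IsState.nonempty {ρ : Matrix d d ℂ} (hρ : IsState ρ) : Nonempty d := by
  by_contra h
  rw [not_nonempty_iff] at h
  simpa [Matrix.trace] using hρ.2

lemma isState_maxMixed [DecidableEq d] [Nonempty d] : IsState (maxMixed d) := by
  refine ⟨Matrix.PosSemidef.one.smul ?_, ?_⟩
  · rw [inv_nonneg]; exact_mod_cast Nat.zero_le _
  · simp [maxMixed, Matrix.trace_smul, Matrix.trace_one]

lemma mProb_nonneg {M : X → Matrix d d ℂ} {ρ : Matrix d d ℂ} (hρ : ρ.PosSemidef) {x : X}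
    (hM : (M x).PosSemidef) : 0 ≤ mProb M ρ x :=
  hρ.re_trace_mul_nonneg hM

lemma sum_mProb [DecidableEq d] [Fintype X] {M : X → Matrix d d ℂ} {ρ : Matrix d d ℂ}
    (hM : ∑ x, M x = 1) (hρ : ρ.trace = 1) : ∑ x, mProb M ρ x = 1 := by
  simp only [mProb]
  rw [← Complex.re_sum, ← Matrix.trace_sum, ← Finset.mul_sum, hM, Matrix.mul_one, hρ,
    Complex.one_re]

lemma mProb_add (M : X → Matrix d d ℂ) (p q : ℝ) (σ τ : Matrix d d ℂ) (x : X) :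
    mProb M ((p : ℂ) • σ + (q : ℂ) • τ) x = p * mProb M σ x + q * mProb M τ x := by
  simp [mProb, Matrix.add_mul, Matrix.trace_add, Matrix.trace_smul]

lemma mProb_maxMixed [DecidableEq d] (M : X → Matrix d d ℂ) (x : X) :
    mProb M (maxMixed d) x = (Fintype.card d : ℝ)⁻¹ * (M x).trace.re := by
  simp [mProb, maxMixed, Matrix.trace_smul]

lemma mProb_le_card_mul_mProb_maxMixed [DecidableEq d] {M : X → Matrix d d ℂ}
    {ρ : Matrix d d ℂ} (hρ : IsState ρ) {x : X} (hM : (M x).PosSemidef) :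
    mProb M ρ x ≤ Fintype.card d * mProb M (maxMixed d) x := by
  have : Nonempty d := hρ.nonempty
  rw [mProb_maxMixed, mul_inv_cancel_left₀ (by positivity)]
  simpa [mProb, hρ.2] using hρ.1.re_trace_mul_le hM

variable [DecidableEq d]

lemma distMeas_nonneg (Ms : Set (Σ m : ℕ, Fin m → Matrix d d ℂ)) (ρ ρ' : Matrix d d ℂ) :
    0 ≤ distMeas Ms ρ ρ' :=
  Real.iSup_nonneg fun _ ↦ Real.iSup_nonneg fun _ ↦ Finset.sum_nonneg fun _ _ ↦ abs_nonneg _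

lemma distMeas_comm (Ms : Set (Σ m : ℕ, Fin m → Matrix d d ℂ)) (ρ ρ' : Matrix d d ℂ) :
    distMeas Ms ρ ρ' = distMeas Ms ρ' ρ := by
  simp only [distMeas, abs_sub_comm]

lemma sum_abs_mProb_sub_le_two [Fintype X] {M : X → Matrix d d ℂ} (hM : IsPOVM M)
    {ρ ρ' : Matrix d d ℂ} (hρ : IsState ρ) (hρ' : IsState ρ') :
    ∑ x, |mProb M ρ x - mProb M ρ' x| ≤ 2 := by
  calc ∑ x, |mProb M ρ x - mProb M ρ' x| ≤ ∑ x, (mProb M ρ x + mProb M ρ' x) := by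
        refine Finset.sum_le_sum fun x _ ↦ abs_le.2 ⟨?_, ?_⟩ <;>
          linarith [mProb_nonneg hρ.1 (hM.1 x), mProb_nonneg hρ'.1 (hM.1 x)]
    _ = 2 := by rw [Finset.sum_add_distrib, sum_mProb hM.2 hρ.2, sum_mProb hM.2 hρ'.2]; norm_num

lemma sum_abs_mProb_sub_le_distMeas {Ms : Set (Σ m : ℕ, Fin m → Matrix d d ℂ)}
    (hMs : ∀ M ∈ Ms, IsPOVM M.2) {ρ ρ' : Matrix d d ℂ} (hρ : IsState ρ) (hρ' : IsState ρ')
    {M : Σ m : ℕ, Fin m → Matrix d d ℂ} (hM : M ∈ Ms) :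
    ∑ x, |mProb M.2 ρ x - mProb M.2 ρ' x| ≤ distMeas Ms ρ ρ' := by
  have hbdd : BddAbove (Set.range fun M : Σ m : ℕ, Fin m → Matrix d d ℂ ↦
      ⨆ (_ : M ∈ Ms), ∑ x, |mProb M.2 ρ x - mProb M.2 ρ' x|) := by
    refine ⟨2, ?_⟩
    rintro _ ⟨M, rfl⟩
    exact Real.iSup_le (fun hM ↦ sum_abs_mProb_sub_le_two (hMs M hM) hρ hρ') (by norm_num)
  exact le_ciSup_of_le hbdd M (by rw [ciSup_pos hM])

lemma ErG_le_add_of_forall_exists {G : Set (Matrix d d ℂ)}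
    {Ms : Set (Σ m : ℕ, Fin m → Matrix d d ℂ)} {ρ ρ' : Matrix d d ℂ} {c : ℝ≥0∞}
    (h : ∀ σ' ∈ G, ∃ σ ∈ G, ∀ M ∈ Ms,
      klDiv2 (mProb M.2 ρ) (mProb M.2 σ) ≤ klDiv2 (mProb M.2 ρ') (mProb M.2 σ') + c) :
    ErG G Ms ρ ≤ ErG G Ms ρ' + c := by
  simp only [ErG, ENNReal.iInf_add]
  refine le_iInf₂ fun σ' hσ' ↦ ?_
  obtain ⟨σ, hσ, hle⟩ := h σ' hσ'
  refine iInf₂_le_of_le σ hσ (iSup₂_le fun M hM ↦ (hle M hM).trans ?_)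
  gcongr
  exact le_iSup₂ (f := fun M (_ : M ∈ Ms) ↦ klDiv2 (mProb M.2 ρ') (mProb M.2 σ')) M hM

theorem ErG_le_add_of_distMeas_le {Ms : Set (Σ m : ℕ, Fin m → Matrix d d ℂ)}
    (hMs : ∀ M ∈ Ms, IsPOVM M.2) {G : Set (Matrix d d ℂ)} (hG : ∀ σ ∈ G, IsState σ)
    (hstar : ∀ σ ∈ G, ∀ p : ℝ, 0 ≤ p → p ≤ 1 →
        ((p : ℂ) • σ + (((1 - p : ℝ)) : ℂ) • maxMixed d) ∈ G)
    {ρ ρ' : Matrix d d ℂ} (hρ : IsState ρ) (hρ' : IsState ρ') {ε : ℝ} (hε : 0 ≤ ε)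
    (hεe : ε ≤ (Real.exp 1)⁻¹) (hdist : distMeas Ms ρ ρ' ≤ ε) :
    ErG G Ms ρ ≤ ErG G Ms ρ' +
      ENNReal.ofReal (2 * ε * Real.logb 2 (6 * (Fintype.card d : ℝ) / ε)) := by
  have : Nonempty d := hρ.nonempty
  have hk : (1 : ℝ) ≤ Fintype.card d := by exact_mod_cast Fintype.card_pos
  refine ErG_le_add_of_forall_exists fun σ hσ ↦ ⟨_, hstar σ hσ (1 + ε)⁻¹ (by positivity)
    (inv_le_one_of_one_le₀ (by linarith)), fun M hM ↦ ?_⟩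
  have hPOVM := hMs M hM
  have hτ : IsState (maxMixed d) := isState_maxMixed
  exact klDiv2_le_add_of_mix hε hεe hk (fun x ↦ mProb_nonneg hρ.1 (hPOVM.1 x))
    (fun x ↦ mProb_nonneg hρ'.1 (hPOVM.1 x)) (fun x ↦ mProb_nonneg (hG σ hσ).1 (hPOVM.1 x))
    (fun x ↦ mProb_nonneg hτ.1 (hPOVM.1 x))
    (fun x ↦ mProb_le_card_mul_mProb_maxMixed hρ (hPOVM.1 x))
    (sum_mProb hPOVM.2 hρ'.2) (sum_mProb hPOVM.2 (hG σ hσ).2) (sum_mProb hPOVM.2 hτ.2)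
    (mProb_add M.2 _ _ σ (maxMixed d))
    ((sum_abs_mProb_sub_le_distMeas hMs hρ hρ' hM).trans hdist)

end QIT

theorem ErG_asymptotic_continuity_general {d : Type} [Fintype d] [DecidableEq d]
    (Ms : Set (Σ m : ℕ, Fin m → Matrix d d ℂ)) (hMs : ∀ M ∈ Ms, IsPOVM M.2)
    (G : Set (Matrix d d ℂ)) (hG : ∀ σ ∈ G, IsState σ)
    (hstar : ∀ σ ∈ G, ∀ p : ℝ, 0 ≤ p → p ≤ 1 →
        ((p : ℂ) • σ + (((1 - p : ℝ)) : ℂ) • maxMixed d) ∈ G)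
    (ρ ρ' : Matrix d d ℂ) (hρ : IsState ρ) (hρ' : IsState ρ')
    (ε : ℝ) (hdist : distMeas Ms ρ ρ' ≤ ε) (hε : ε ≤ (Real.exp 1)⁻¹) :
    ErG G Ms ρ ≤ ErG G Ms ρ' +
        ENNReal.ofReal (2 * ε * Real.logb 2 (6 * (Fintype.card d : ℝ) / ε)) ∧
    ErG G Ms ρ' ≤ ErG G Ms ρ +
        ENNReal.ofReal (2 * ε * Real.logb 2 (6 * (Fintype.card d : ℝ) / ε)) := by
  have hε0 : 0 ≤ ε := (distMeas_nonneg Ms ρ ρ').trans hdist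
  exact ⟨ErG_le_add_of_distMeas_le hMs hG hstar hρ hρ' hε0 hε hdist,
    ErG_le_add_of_distMeas_le hMs hG hstar hρ' hρ hε0 hε (distMeas_comm Ms ρ' ρ ▸ hdist)⟩

/-- **Proposition 3** (asymptotic continuity of E^{(G)}_{r,M}). -/
theorem ErG_asymptotic_continuity {d : Type} [Fintype d] [DecidableEq d]
    (Ms : Set (Σ m : ℕ, Fin m → Matrix d d ℂ)) (hMs : ∀ M ∈ Ms, IsPOVM M.2)
    (G : Set (Matrix d d ℂ)) (hG : ∀ σ ∈ G, IsState σ)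
    (hτ : maxMixed d ∈ G)
    (hstar : ∀ σ ∈ G, ∀ p : ℝ, 0 ≤ p → p ≤ 1 →
        ((p : ℂ) • σ + (((1 - p : ℝ)) : ℂ) • maxMixed d) ∈ G)
    (ρ ρ' : Matrix d d ℂ) (hρ : IsState ρ) (hρ' : IsState ρ')
    (ε : ℝ) (hdist : distMeas Ms ρ ρ' ≤ ε) (hε : ε ≤ (Real.exp 1)⁻¹) :
    ErG G Ms ρ ≤ ErG G Ms ρ' +
        ENNReal.ofReal (2 * ε * Real.logb 2 (6 * (Fintype.card d : ℝ) / ε)) ∧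
    ErG G Ms ρ' ≤ ErG G Ms ρ +
        ENNReal.ofReal (2 * ε * Real.logb 2 (6 * (Fintype.card d : ℝ) / ε)) :=
  ErG_asymptotic_continuity_general Ms hMs G hG hstar ρ ρ' hρ hρ' ε hdist hε
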